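/- arXiv:1405.7236 — 7 statements merged into one kernel-verified Lean document; each statement's English description precedes it below -/
import Mathlib

section
/- Let E/F be a finite Galois extension of fields whose Galois group is cyclic of order t, generated by α. Let ρ : G → GL(d,E) be an absolutely irreducible representation of a group G, and suppose C ∈ GL(d,E) satisfies C⁻¹ρ(g)C = ρ(g)^α for all g ∈ G. Then C·C^α·C^{α²}···C^{α^{t−1}} = μI, where μ is an element of F and I is the d×d identity matrix. -/
/-!
The partial products `Nₙ = C · C^α ⋯ C^(αⁿ⁻¹)` satisfy `ρ(g) Nₙ = Nₙ ρ(g)^(αⁿ)`, so `N = Nₜ`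
commutes with every `ρ(g)` (as `αᵗ = 1`) and is a scalar `c` by absolute irreducibility.
Computing `Nₜ₊₁` in two ways gives `C · N^α = N · C`, i.e. `α c = c`; since `α` generates the
Galois group, `c` lies in `F`.
-/

section TwistedPow

variable {H M : Type*} [Monoid H] [Monoid M] [MulDistribMulAction H M]

def twistedPow (a : H) (x : M) (n : ℕ) : M :=
  ((List.range n).map fun i => (a ^ i) • x).prod

variable (a : H) (x : M)

theorem twistedPow_succ (n : ℕ) : twistedPow a x (n + 1) = twistedPow a x n * (a ^ n) • x := by
  simp only [twistedPow, List.prod_range_succ]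

theorem twistedPow_succ' (n : ℕ) : twistedPow a x (n + 1) = x * a • twistedPow a x n := by
  simp only [twistedPow, List.prod_range_succ', List.smul_prod', List.map_map, pow_zero, one_smul,
    Function.comp_def, pow_succ', mul_smul]

variable {a x}

theorem mul_twistedPow_of_mul_eq {y : M} (h : y * x = x * a • y) (n : ℕ) :
    y * twistedPow a x n = twistedPow a x n * (a ^ n) • y := by
  induction n with
  | zero => simp [twistedPow]
  | succ n ih =>
    have h' : (a ^ n) • y * (a ^ n) • x = (a ^ n) • x * (a ^ (n + 1)) • y := by
      rw [← smul_mul', h, smul_mul', pow_succ, mul_smul]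
    rw [twistedPow_succ, ← mul_assoc, ih, mul_assoc, h', mul_assoc]

theorem commute_twistedPow_of_pow_eq_one {t : ℕ} (ha : a ^ t = 1) {y : M} (h : y * x = x * a • y) :
    Commute y (twistedPow a x t) := by
  simpa [Commute, SemiconjBy, ha] using mul_twistedPow_of_mul_eq h t

theorem mul_smul_twistedPow_of_pow_eq_one {t : ℕ} (ha : a ^ t = 1) :
    x * a • twistedPow a x t = twistedPow a x t * x := by
  rw [← twistedPow_succ', twistedPow_succ, ha, one_smul]

end TwistedPow

theorem mem_center_of_forall_commute_of_span_eq_top {R A : Type*} [CommSemiring R] [Semiring A]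
    [Algebra R A] {s : Set A} (hs : Submodule.span R s = ⊤) {x : A} (hx : ∀ y ∈ s, Commute y x) :
    x ∈ Set.center A := by
  have hle : Submodule.span R s ≤ Subalgebra.toSubmodule (Subalgebra.centralizer R {x}) :=
    Submodule.span_le.mpr fun y hy => Subalgebra.mem_centralizer_iff R |>.mpr <| by
      simpa using (hx y hy).eq.symm
  refine Semigroup.mem_center_iff.mpr fun z => ?_
  have hz : z ∈ Subalgebra.centralizer R {x} := hle (hs ▸ Submodule.mem_top)
  simpa using ((Subalgebra.mem_centralizer_iff R).mp hz x rfl).symm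

namespace Matrix

theorem algEquiv_smul_eq_map {F E m n : Type*} [CommSemiring F] [Semiring E] [Algebra F E]
    (σ : E ≃ₐ[F] E) (A : Matrix m n E) : σ • A = A.map σ :=
  rfl

variable {H R n : Type*} [Monoid H] [Fintype n] [DecidableEq n]

instance mulSemiringAction [Semiring R] [MulSemiringAction H R] :
    MulSemiringAction H (Matrix n n R) where
  smul_one σ := by ext i j; by_cases h : i = j <;> simp [one_apply, h]
  smul_mul σ A B := by ext i j; simp [mul_apply, Finset.smul_sum]

theorem smul_scalar [Semiring R] [MulSemiringAction H R] (σ : H) (c : R) :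
    σ • scalar n c = scalar n (σ • c) := by
  ext i j; by_cases h : i = j <;> simp [h]

theorem eq_of_mul_scalar_eq_scalar_mul [CommSemiring R] [Nonempty n] {C : Matrix n n R}
    (hC : IsUnit C) {a b : R} (h : C * scalar n a = scalar n b * C) : a = b := by
  rw [scalar_commute b (fun _ => Commute.all _ _) C] at h
  exact scalar_inj.mp (hC.mul_left_cancel h)

end Matrix

theorem IsGalois.mem_range_algebraMap_of_fixed_by_generator {F E : Type*} [Field F] [Field E]
    [Algebra F E] [IsGalois F E] {α : Gal(E/F)} (hgen : ∀ σ : Gal(E/F), σ ∈ Subgroup.zpowers α)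
    {x : E} (hx : α x = x) : x ∈ Set.range (algebraMap F E) :=
  (InfiniteGalois.mem_range_algebraMap_iff_fixed x).mpr fun σ =>
    Subgroup.zpowers_le.mpr (MulAction.mem_stabilizer_iff.mpr hx) (hgen σ)

theorem glasby_howlett_prop_1_1_general
    {F E : Type*} [Field F] [Field E] [Algebra F E]
    [IsGalois F E]
    (t : ℕ) (α : E ≃ₐ[F] E) (hord : orderOf α = t)
    (hgen : ∀ σ : E ≃ₐ[F] E, σ ∈ Subgroup.zpowers α)
    {G : Type*} [Group G] {d : ℕ}
    (ρ : G →* GL (Fin d) E)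
    (hirr : Submodule.span E (Set.range fun g => (ρ g : Matrix (Fin d) (Fin d) E)) = ⊤)
    (C : GL (Fin d) E)
    (hC : ∀ g : G, ((C⁻¹ * ρ g * C : GL (Fin d) E) : Matrix (Fin d) (Fin d) E)
        = (ρ g : Matrix (Fin d) (Fin d) E).map ⇑α) :
    ∃ μ : F,
      ((List.range t).map fun i =>
          (C : Matrix (Fin d) (Fin d) E).map ⇑(α ^ i)).prod
        = algebraMap F E μ • (1 : Matrix (Fin d) (Fin d) E) := by
  rcases isEmpty_or_nonempty (Fin d) with hd | hd
  · exact ⟨0, Subsingleton.elim _ _⟩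
  have hαt : α ^ t = 1 := hord ▸ pow_orderOf_eq_one α
  have hrel (g : G) : (ρ g : Matrix (Fin d) (Fin d) E) * (C : Matrix (Fin d) (Fin d) E) =
      C * α • (ρ g : Matrix (Fin d) (Fin d) E) := by
    rw [Matrix.algEquiv_smul_eq_map, ← hC g, Units.val_mul, Units.val_mul, ← mul_assoc, ← mul_assoc,
      Units.mul_inv, one_mul]
  obtain ⟨c, hc⟩ : twistedPow α (C : Matrix (Fin d) (Fin d) E) t ∈ Set.range (Matrix.scalar _) := by
    rw [← Matrix.center_eq_range]
    refine mem_center_of_forall_commute_of_span_eq_top hirr ?_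
    rintro _ ⟨g, rfl⟩
    exact commute_twistedPow_of_pow_eq_one hαt (hrel g)
  have hfix : α c = c := by
    refine Matrix.eq_of_mul_scalar_eq_scalar_mul C.isUnit ?_
    rw [← AlgEquiv.smul_def, ← Matrix.smul_scalar, hc]
    exact mul_smul_twistedPow_of_pow_eq_one hαt
  obtain ⟨μ, rfl⟩ := IsGalois.mem_range_algebraMap_of_fixed_by_generator hgen hfix
  refine ⟨μ, ?_⟩
  rw [Matrix.smul_one_eq_diagonal, ← Matrix.scalar_apply, hc]
  simp only [twistedPow, Matrix.algEquiv_smul_eq_map]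

/-- Proposition (1.1): if `C ∈ GL(d,E)` conjugates `ρ(g)` to `ρ(g)^α` for all `g ∈ G`,
where `ρ` is absolutely irreducible and the Galois group of `E/F` is cyclic of order `t`
generated by `α`, then `C·C^α·C^{α²}···C^{α^{t−1}} = μ·I` with `μ ∈ F`. -/
theorem glasby_howlett_prop_1_1
    {F E : Type*} [Field F] [Field E] [Algebra F E]
    [FiniteDimensional F E] [IsGalois F E]
    (t : ℕ) (α : E ≃ₐ[F] E) (hord : orderOf α = t)
    (hgen : ∀ σ : E ≃ₐ[F] E, σ ∈ Subgroup.zpowers α)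
    {G : Type*} [Group G] {d : ℕ}
    (ρ : G →* GL (Fin d) E)
    (hirr : Submodule.span E (Set.range fun g => (ρ g : Matrix (Fin d) (Fin d) E)) = ⊤)
    (C : GL (Fin d) E)
    (hC : ∀ g : G, ((C⁻¹ * ρ g * C : GL (Fin d) E) : Matrix (Fin d) (Fin d) E)
        = (ρ g : Matrix (Fin d) (Fin d) E).map ⇑α) :
    ∃ μ : F,
      ((List.range t).map fun i =>
          (C : Matrix (Fin d) (Fin d) E).map ⇑(α ^ i)).prod
        = algebraMap F E μ • (1 : Matrix (Fin d) (Fin d) E) :=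
  glasby_howlett_prop_1_1_general t α hord hgen ρ hirr C hC
end

section
/- Let E/F be a finite Galois extension of fields whose Galois group is cyclic of order t, generated by α. If C ∈ GL(d,E) satisfies C·C^α···C^{α^{t−1}} = I, then there exists a nonzero column vector v ∈ E^d such that C·v^α = v. -/
/-!
The argument is the averaging proof of Hilbert's Theorem 90. Put `N k = C C^α ⋯ C^{α^(k-1)}`, so
that `C (N k)^α = N (k+1)` and, by hypothesis, `N t = 1`. Then for every `x` the matrix
`M x = ∑_{i<t} α^i(x) N i` satisfies `C (M x)^α = M x`, because applying `α` and multiplying by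
`C` only shifts the summation index cyclically. Dedekind's independence of the characters
`α^0, …, α^(t-1)` makes `M x ≠ 0` for some `x` (its `i = 0` coefficient is `N 0 = 1`), and any
nonzero column of `M x` is the required vector.
-/

open Finset

theorem AlgEquiv.linearIndependent_pow {F K : Type*} [CommSemiring F] [Field K] [Algebra F K]
    (α : K ≃ₐ[F] K) {t : ℕ} (ht : t ≤ orderOf α) :
    LinearIndependent K (fun i : Fin t => ⇑(α ^ (i : ℕ))) := by
  have hinj : Function.Injective fun i : Fin t => ((α ^ (i : ℕ) : K ≃ₐ[F] K) : K →* K) := by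
    intro i j hij
    exact Fin.ext <| pow_injOn_Iio_orderOf (x := α) (i.2.trans_le ht) (j.2.trans_le ht)
      (AlgEquiv.ext (DFunLike.congr_fun hij :))
  exact (linearIndependent_monoidHom K K).comp _ hinj

namespace Matrix

section TwistedProd

variable {F A n : Type*} [CommSemiring F] [CommSemiring A] [Algebra F A]
  [Fintype n] [DecidableEq n] (α : A ≃ₐ[F] A) (C : Matrix n n A)

def twistedProd (k : ℕ) : Matrix n n A :=
  ((List.range k).map fun i => C.map ⇑(α ^ i)).prod

@[simp]
theorem twistedProd_zero : twistedProd α C 0 = 1 := rfl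

theorem twistedProd_succ (k : ℕ) :
    twistedProd α C (k + 1) = twistedProd α C k * C.map ⇑(α ^ k) := by
  simp [twistedProd, List.range_succ]

omit [Fintype n] [DecidableEq n] in
theorem map_map_pow (M : Matrix n n A) (k : ℕ) :
    (M.map ⇑(α ^ k)).map ⇑α = M.map ⇑(α ^ (k + 1)) := by
  ext i j
  simp only [map_apply, pow_succ', AlgEquiv.mul_apply]

theorem mul_map_twistedProd (k : ℕ) :
    C * (twistedProd α C k).map ⇑α = twistedProd α C (k + 1) := by
  induction k with
  | zero =>
    rw [twistedProd_succ, twistedProd_zero, Matrix.map_one _ (map_zero α) (map_one α), mul_one,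
      one_mul, pow_zero]
    exact (map_id C).symm
  | succ k ih =>
    rw [twistedProd_succ α C k, Matrix.map_mul, ← mul_assoc, ih, map_map_pow,
      twistedProd_succ α C (k + 1)]

def twistedSum (t : ℕ) (x : A) : Matrix n n A :=
  ∑ i ∈ range t, (α ^ i) x • twistedProd α C i

theorem mul_map_twistedSum {t : ℕ} (hα : α ^ t = 1) (hC : twistedProd α C t = 1) (x : A) :
    C * (twistedSum α C t x).map ⇑α = twistedSum α C t x := by
  set g : ℕ → Matrix n n A := fun i => (α ^ i) x • twistedProd α C i
  have hg : g t = g 0 := by simp only [g, hα, hC, pow_zero, twistedProd_zero]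
  have hmap : C * (twistedSum α C t x).map ⇑α = ∑ i ∈ range t, g (i + 1) := by
    rw [twistedSum, ← AlgEquiv.mapMatrix_apply, map_sum, mul_sum]
    refine sum_congr rfl fun i _ => ?_
    rw [AlgEquiv.mapMatrix_apply, map_smul' _ _ _ (map_mul α), Matrix.mul_smul,
      mul_map_twistedProd, ← AlgEquiv.mul_apply, ← pow_succ']
  rw [hmap, twistedSum]
  cases t with
  | zero => rfl
  | succ s => rw [sum_range_succ, hg, ← sum_range_succ']

end TwistedProd

theorem exists_twistedSum_ne_zero {F K n : Type*} [CommSemiring F] [Field K] [Algebra F K]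
    [Fintype n] [DecidableEq n] [Nonempty n] (α : K ≃ₐ[F] K) (C : Matrix n n K) {t : ℕ}
    (ht0 : 0 < t) (ht : t ≤ orderOf α) : ∃ x, twistedSum α C t x ≠ 0 := by
  by_contra! h
  obtain ⟨j⟩ := ‹Nonempty n›
  have hcoeff : ∑ i : Fin t, twistedProd α C i j j • ⇑(α ^ (i : ℕ)) = 0 := by
    funext x
    have hx := congrFun (congrFun (h x) j) j
    simp only [twistedSum, sum_apply, smul_apply, smul_eq_mul, zero_apply] at hx
    simp only [Finset.sum_apply, Pi.smul_apply, smul_eq_mul, Pi.zero_apply,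
      Fin.sum_univ_eq_sum_range (fun i => twistedProd α C i j j * (α ^ i) x)]
    simpa only [mul_comm] using hx
  have hzero := Fintype.linearIndependent_iff.mp (α.linearIndependent_pow ht) _ hcoeff ⟨0, ht0⟩
  simp at hzero

theorem exists_ne_zero_mulVec_map_eq_self {R m n : Type*} [NonUnitalNonAssocSemiring R]
    [Fintype n] {f : R → R} {C : Matrix n n R} {M : Matrix n m R} (hM : M ≠ 0)
    (h : C * M.map f = M) : ∃ v : n → R, v ≠ 0 ∧ C *ᵥ (fun i => f (v i)) = v := by
  obtain ⟨j, k, hjk⟩ : ∃ j k, M j k ≠ 0 := by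
    by_contra! h0
    exact hM (ext h0)
  exact ⟨fun i => M i k, fun h0 => hjk (congrFun h0 j),
    funext fun i => congrFun (congrFun h i) k⟩

end Matrix

theorem glasby_howlett_lemma_1_2_general
    {F E : Type*} [Field F] [Field E] [Algebra F E]
    [FiniteDimensional F E]
    (t : ℕ) (α : E ≃ₐ[F] E) (hord : orderOf α = t)
    {d : ℕ} (hd : 0 < d)
    (C : GL (Fin d) E)
    (hC : ((List.range t).map fun i =>
        (C : Matrix (Fin d) (Fin d) E).map ⇑(α ^ i)).prod = 1) :
    ∃ v : Fin d → E, v ≠ 0 ∧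
      (C : Matrix (Fin d) (Fin d) E).mulVec (fun i => α (v i)) = v := by
  have : Nonempty (Fin d) := ⟨⟨0, hd⟩⟩
  have hαt : α ^ t = 1 := hord ▸ pow_orderOf_eq_one α
  obtain ⟨x, hx⟩ := Matrix.exists_twistedSum_ne_zero α (C : Matrix (Fin d) (Fin d) E)
    (hord ▸ orderOf_pos α) hord.ge
  exact Matrix.exists_ne_zero_mulVec_map_eq_self hx (Matrix.mul_map_twistedSum α _ hαt hC x)

/-- Lemma (1.2): if the Galois group of `E/F` is cyclic of order `t` generated by `α`,
and `C ∈ GL(d,E)` satisfies `C·C^α···C^{α^{t−1}} = I`, then there is a nonzero column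
vector `v ∈ E^d` with `C·v^α = v`. -/
theorem glasby_howlett_lemma_1_2
    {F E : Type*} [Field F] [Field E] [Algebra F E]
    [FiniteDimensional F E] [IsGalois F E]
    (t : ℕ) (α : E ≃ₐ[F] E) (hord : orderOf α = t)
    (hgen : ∀ σ : E ≃ₐ[F] E, σ ∈ Subgroup.zpowers α)
    {d : ℕ} (hd : 0 < d)
    (C : GL (Fin d) E)
    (hC : ((List.range t).map fun i =>
        (C : Matrix (Fin d) (Fin d) E).map ⇑(α ^ i)).prod = 1) :
    ∃ v : Fin d → E, v ≠ 0 ∧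
      (C : Matrix (Fin d) (Fin d) E).mulVec (fun i => α (v i)) = v :=
  glasby_howlett_lemma_1_2_general t α hord hd C hC
end

section
/- (Matrix version of the multiplicative form of Hilbert's Theorem 90.) Let E/F be a finite Galois extension of fields whose Galois group is cyclic of order t, generated by α. If C ∈ GL(d,E) satisfies C·C^α···C^{α^{t−1}} = I, then there exists A ∈ GL(d,E) with C = A·(A^α)⁻¹. -/
/-!
Put `c i = C · C^α ⋯ C^{α^(i-1)}`, so that `c (i + 1) = C · (c i)^α` and `c t = 1`. For every
vector `u` the twisted trace `p u = ∑_{i<t} c i · α^i(u)` then satisfies `C · (p u)^α = p u`: the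
sum telescopes. Replacing `u` by `z • u` and applying Dedekind's independence of the characters
`α^i` shows that no nonzero functional kills all `p u`, so these vectors span `E^d`. Any `d`
linearly independent ones are the columns of an invertible `A` with `C · A^α = A`.
-/

namespace Matrix

variable {R K n : Type*} [CommSemiring R] [Field K] [Algebra R K] [Fintype n] [DecidableEq n]

theorem exists_isUnit_mul_map_eq_of_span {f : K → K} {C : Matrix n n K} {S : Set (n → K)}
    (hS : Submodule.span K S = ⊤) (hfix : ∀ v ∈ S, C *ᵥ (f ∘ v) = v) :
    ∃ A : Matrix n n K, IsUnit A ∧ C * A.map f = A := by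
  obtain ⟨s, hsS, hs_span, hs_li⟩ := exists_linearIndependent K S
  let b := Module.Basis.mk hs_li (by rw [Subtype.range_coe, hs_span, hS])
  let b' := b.reindex (b.indexEquiv (Pi.basisFun K n))
  have hb'S (j : n) : b' j ∈ S := by simpa [b', b] using hsS (Subtype.prop _)
  refine ⟨(of b')ᵀ, linearIndependent_cols_iff_isUnit.1 b'.linearIndependent, ?_⟩
  ext r j
  exact congrFun (hfix _ (hb'S j)) r

variable (σ : K ≃ₐ[R] K) (C : Matrix n n K)

/-- `C · C^σ ⋯ C^{σ^(i-1)}`, the matrix part of `(C, σ)^i` in the semidirect product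
`GL_n(K) ⋊ ⟨σ⟩`. -/
def twistedPow (i : ℕ) : Matrix n n K := ((List.range i).map fun j => C.map ⇑(σ ^ j)).prod

theorem twistedPow_zero : twistedPow σ C 0 = 1 := rfl

theorem twistedPow_succ (i : ℕ) : twistedPow σ C (i + 1) = C * (twistedPow σ C i).map σ := by
  have hmap : (twistedPow σ C i).map σ = (σ : K →+* K).mapMatrix (twistedPow σ C i) := rfl
  rw [hmap, twistedPow, twistedPow, map_list_prod, List.range_succ_eq_map]
  simp only [List.map_cons, List.prod_cons, List.map_map, Function.comp_def, pow_zero, pow_succ',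
    RingHom.mapMatrix_apply, Matrix.map_map]
  rfl

noncomputable def twistedTrace (u : n → K) : n → K :=
  ∑ i ∈ Finset.range (orderOf σ), twistedPow σ C i *ᵥ (⇑(σ ^ i) ∘ u)

theorem mulVec_comp_twistedTrace {C : Matrix n n K} (hC : twistedPow σ C (orderOf σ) = 1)
    (u : n → K) : C *ᵥ (σ ∘ twistedTrace σ C u) = twistedTrace σ C u := by
  set g : ℕ → n → K := fun i => twistedPow σ C i *ᵥ (⇑(σ ^ i) ∘ u)
  have hσ_comp : ⇑σ ∘ twistedTrace σ C u =
      ∑ i ∈ Finset.range (orderOf σ), (twistedPow σ C i).map σ *ᵥ (⇑(σ ^ (i + 1)) ∘ u) := by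
    ext k
    rw [Function.comp_apply, twistedTrace, Finset.sum_apply, map_sum, Finset.sum_apply]
    refine Finset.sum_congr rfl fun i _ => ?_
    rw [pow_succ']
    exact RingHom.map_mulVec (σ : K →+* K) _ _ k
  have hg : g (orderOf σ) = g 0 := by
    simp [g, hC, twistedPow_zero, -AlgEquiv.coe_pow, pow_orderOf_eq_one]
  calc C *ᵥ (σ ∘ twistedTrace σ C u) = ∑ i ∈ Finset.range (orderOf σ), g (i + 1) := by
        simp [hσ_comp, Matrix.mulVec_sum, Matrix.mulVec_mulVec, g, twistedPow_succ]
    _ = ∑ i ∈ Finset.range (orderOf σ), g i := by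
        have hshift := Finset.sum_range_succ' g (orderOf σ)
        rw [Finset.sum_range_succ, hg] at hshift
        exact add_right_cancel hshift.symm

theorem linearIndependent_pow_lt_orderOf :
    LinearIndependent K fun i : Fin (orderOf σ) => ⇑(σ ^ (i : ℕ)) :=
  (linearIndependent_monoidHom K K).comp
    (fun i : Fin (orderOf σ) => ((σ ^ (i : ℕ) : K ≃ₐ[R] K) : K →* K))
    fun i j hij => Fin.ext <| pow_injOn_Iio_orderOf i.2 j.2 <|
      AlgEquiv.ext (DFunLike.congr_fun hij :)

theorem span_range_twistedTrace (hσ : 0 < orderOf σ) :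
    Submodule.span K (Set.range (twistedTrace σ C)) = ⊤ := by
  rw [← Submodule.dualAnnihilator_eq_bot_iff, Submodule.eq_bot_iff]
  intro φ hφ
  refine LinearMap.ext fun w => ?_
  have hsmul (z : K) (i : ℕ) : twistedPow σ C i *ᵥ (⇑(σ ^ i) ∘ (z • w)) =
      (σ ^ i) z • (twistedPow σ C i *ᵥ (⇑(σ ^ i) ∘ w)) := by
    rw [← Matrix.mulVec_smul]
    congr 1
    ext k
    simp [-AlgEquiv.coe_pow]
  have hkey : ∑ i : Fin (orderOf σ),
      φ (twistedPow σ C i *ᵥ (⇑(σ ^ (i : ℕ)) ∘ w)) • ⇑(σ ^ (i : ℕ)) = 0 := by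
    ext z
    have hz := (Submodule.mem_dualAnnihilator φ).1 hφ _ (Submodule.subset_span ⟨z • w, rfl⟩)
    rw [twistedTrace, ← Fin.sum_univ_eq_sum_range] at hz
    simp only [hsmul, map_sum, map_smul, smul_eq_mul] at hz
    simpa [Finset.sum_apply, -AlgEquiv.coe_pow, mul_comm] using hz
  simpa [twistedPow_zero, -AlgEquiv.coe_pow, Function.comp_def] using
    Fintype.linearIndependent_iff.1 (linearIndependent_pow_lt_orderOf σ) _ hkey ⟨0, hσ⟩

theorem exists_isUnit_eq_mul_inv_map {C : Matrix n n K} (hσ : 0 < orderOf σ)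
    (hC : twistedPow σ C (orderOf σ) = 1) :
    ∃ A : Matrix n n K, IsUnit A ∧ C = A * (A.map σ)⁻¹ := by
  obtain ⟨A, hA, hCA⟩ := exists_isUnit_mul_map_eq_of_span (span_range_twistedTrace σ C hσ)
    (by rintro _ ⟨u, rfl⟩; exact mulVec_comp_twistedTrace σ hC u)
  have hAσ : IsUnit (A.map σ) := hA.map (σ : K →+* K).mapMatrix
  refine ⟨A, hA, ?_⟩
  nth_rw 1 [← hCA]
  rw [Matrix.mul_assoc, mul_nonsing_inv _ ((isUnit_iff_isUnit_det _).1 hAσ), Matrix.mul_one]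

end Matrix

theorem glasby_howlett_prop_1_3_general
    {F E : Type*} [Field F] [Field E] [Algebra F E]
    [FiniteDimensional F E]
    (t : ℕ) (α : E ≃ₐ[F] E) (hord : orderOf α = t)
    {d : ℕ}
    (C : GL (Fin d) E)
    (hC : ((List.range t).map fun i =>
        (C : Matrix (Fin d) (Fin d) E).map ⇑(α ^ i)).prod = 1) :
    ∃ A : Matrix (Fin d) (Fin d) E, IsUnit A ∧
      (C : Matrix (Fin d) (Fin d) E) = A * (A.map ⇑α)⁻¹ := by
  subst hord
  exact Matrix.exists_isUnit_eq_mul_inv_map α (orderOf_pos α) hC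

/-- Proposition (1.3), a matrix version of the multiplicative Hilbert's Theorem 90:
if the Galois group of `E/F` is cyclic of order `t` generated by `α`, and
`C ∈ GL(d,E)` satisfies `C·C^α···C^{α^{t−1}} = I`, then there exists `A ∈ GL(d,E)`
with `C = A·(A^α)⁻¹`. -/
theorem glasby_howlett_prop_1_3
    {F E : Type*} [Field F] [Field E] [Algebra F E]
    [FiniteDimensional F E] [IsGalois F E]
    (t : ℕ) (α : E ≃ₐ[F] E) (hord : orderOf α = t)
    (hgen : ∀ σ : E ≃ₐ[F] E, σ ∈ Subgroup.zpowers α)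
    {d : ℕ}
    (C : GL (Fin d) E)
    (hC : ((List.range t).map fun i =>
        (C : Matrix (Fin d) (Fin d) E).map ⇑(α ^ i)).prod = 1) :
    ∃ A : Matrix (Fin d) (Fin d) E, IsUnit A ∧
      (C : Matrix (Fin d) (Fin d) E) = A * (A.map ⇑α)⁻¹ :=
  glasby_howlett_prop_1_3_general t α hord C hC
end

section
/- Let F be a finite field of order q and let d ≥ 1. Then 1 − q⁻¹ ≥ |GL(d,F)| / |Mat(d,F)| > 1 − q⁻¹ − q⁻² ≥ 1/4, where |Mat(d,F)| = q^{d²} is the number of all d×d matrices over F and |GL(d,F)| is the number of invertible ones. -/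
/-!
The proportion of invertible `d × d` matrices over `𝔽_q` is `∏_{i=1}^{d} (1 - r^i)`, `r = q⁻¹`.
Every factor after the first lies in `[0, 1]`, giving the upper bound `1 - r`. For the lower
bound, the Weierstrass inequality `∏ (1 - aᵢ) ≥ 1 - ∑ aᵢ` applied to the factors with `i ≥ 2`
gives `(1 - r) (1 - ∑_{i=2}^{d} r^i) = 1 - r - r² + r^(d+1) > 1 - r - r²`, and
`1 - r - r² ≥ 1/4` since `r ≤ 1/2`.
-/

open Finset

theorem Finset.one_sub_sum_le_prod_one_sub {ι R : Type*} [CommRing R] [LinearOrder R]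
    [IsStrictOrderedRing R] (s : Finset ι) {f : ι → R} (h0 : ∀ i ∈ s, 0 ≤ f i)
    (h1 : ∀ i ∈ s, f i ≤ 1) : 1 - ∑ i ∈ s, f i ≤ ∏ i ∈ s, (1 - f i) := by
  induction s using Finset.cons_induction with
  | empty => simp
  | cons a s ha ih =>
    rw [sum_cons, prod_cons]
    have ha0 := h0 a (mem_cons_self a s)
    have ha1 := h1 a (mem_cons_self a s)
    have hsum : 0 ≤ ∑ i ∈ s, f i := sum_nonneg fun i hi ↦ h0 i (mem_cons_of_mem hi)
    have ih := ih (fun i hi ↦ h0 i (mem_cons_of_mem hi)) fun i hi ↦ h1 i (mem_cons_of_mem hi)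
    nlinarith [mul_le_mul_of_nonneg_left ih (sub_nonneg.2 ha1)]

section ProdOneSubPow

variable {R : Type*} [Field R] [LinearOrder R] [IsStrictOrderedRing R] {r : R}

theorem prod_range_one_sub_pow_succ_le (hr0 : 0 ≤ r) (hr1 : r ≤ 1) {d : ℕ} (hd : 1 ≤ d) :
    ∏ i ∈ range d, (1 - r ^ (i + 1)) ≤ 1 - r := by
  obtain ⟨e, rfl⟩ := Nat.exists_eq_add_of_le' hd
  rw [prod_range_succ', zero_add, pow_one]
  refine mul_le_of_le_one_left (sub_nonneg.2 hr1) (prod_le_one (fun i _ ↦ ?_) fun i _ ↦ ?_)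
  · exact sub_nonneg.2 (pow_le_one₀ hr0 hr1)
  · exact sub_le_self _ (pow_nonneg hr0 _)

theorem one_sub_sub_sq_lt_prod_range_one_sub_pow_succ (hr0 : 0 < r) (hr1 : r < 1) (d : ℕ) :
    1 - r - r ^ 2 < ∏ i ∈ range d, (1 - r ^ (i + 1)) := by
  rcases d with _ | e
  · rw [prod_range_zero]
    linarith [sq_nonneg r]
  rw [prod_range_succ', zero_add, pow_one]
  have tail : 1 - ∑ i ∈ range e, r ^ (i + 1 + 1) ≤ ∏ i ∈ range e, (1 - r ^ (i + 1 + 1)) :=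
    one_sub_sum_le_prod_one_sub _ (fun i _ ↦ pow_nonneg hr0.le _)
      fun i _ ↦ pow_le_one₀ hr0.le hr1.le
  have geom : (∑ i ∈ range e, r ^ (i + 1 + 1)) * (1 - r) = r ^ 2 * (1 - r ^ e) := by
    simp_rw [pow_succ _ (_ + 1), pow_succ _ (_ : ℕ), ← sum_mul]
    rw [← geom_sum_mul_of_le_one hr1.le]
    ring
  have hpos : 0 < r ^ e * r ^ 2 := by positivity
  nlinarith [mul_le_mul_of_nonneg_right tail (sub_nonneg.2 hr1.le)]

end ProdOneSubPow

theorem card_GL_div_card_pow_sq {F K : Type*} [Field F] [Fintype F] [Field K] [CharZero K]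
    (d : ℕ) :
    (Nat.card (GL (Fin d) F) : K) / (Fintype.card F : K) ^ (d ^ 2)
      = ∏ i ∈ range d, (1 - (Fintype.card F : K)⁻¹ ^ (i + 1)) := by
  set q := Fintype.card F
  have hq : (q : K) ≠ 0 := Nat.cast_ne_zero.2 Fintype.card_ne_zero
  have factor : ∀ i < d,
      ((q ^ d - q ^ i : ℕ) : K) = (q : K) ^ d * (1 - (q : K)⁻¹ ^ (d - i)) := by
    intro i hi
    have hpow : (q : K) ^ (d - i) * (q : K) ^ i = (q : K) ^ d := by
      rw [← pow_add, Nat.sub_add_cancel hi.le]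
    rw [Nat.cast_sub (Nat.pow_le_pow_right Fintype.card_pos hi.le), Nat.cast_pow, Nat.cast_pow,
      ← hpow, inv_pow]
    field_simp
    ring
  rw [Matrix.card_GL_field, Nat.cast_prod,
    Fin.prod_univ_eq_prod_range (fun i ↦ ((q ^ d - q ^ i : ℕ) : K)),
    prod_congr rfl fun i hi ↦ factor i (mem_range.1 hi), prod_mul_distrib, prod_const, card_range,
    ← pow_mul, sq, mul_div_cancel_left₀ _ (pow_ne_zero _ hq),
    ← prod_range_reflect (fun i ↦ 1 - (q : K)⁻¹ ^ (i + 1))]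
  refine prod_congr rfl fun i hi ↦ ?_
  have hid := mem_range.1 hi
  congr 2
  omega

/-- For a finite field `F` of order `q` and `d ≥ 1`:
`1 − q⁻¹ ≥ |GL(d,F)|/|Mat(d,F)| > 1 − q⁻¹ − q⁻² ≥ 1/4`,
where `|Mat(d,F)| = q^(d²)`. -/
theorem proportion_of_invertible_matrices
    {F : Type*} [Field F] [Fintype F] (d : ℕ) (hd : 1 ≤ d) :
    (1 - ((Fintype.card F : ℝ))⁻¹ ≥
      (Nat.card (GL (Fin d) F) : ℝ) / ((Fintype.card F : ℝ) ^ (d ^ 2))) ∧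
    ((Nat.card (GL (Fin d) F) : ℝ) / ((Fintype.card F : ℝ) ^ (d ^ 2)) >
      1 - ((Fintype.card F : ℝ))⁻¹ - (((Fintype.card F : ℝ)) ^ 2)⁻¹) ∧
    (1 - ((Fintype.card F : ℝ))⁻¹ - (((Fintype.card F : ℝ)) ^ 2)⁻¹ ≥ 1 / 4) := by
  have hq : (2 : ℝ) ≤ Fintype.card F := by exact_mod_cast Fintype.one_lt_card (α := F)
  rw [card_GL_div_card_pow_sq, ← inv_pow]
  set r := (Fintype.card F : ℝ)⁻¹
  have hr0 : 0 < r := by positivity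
  have hr : r ≤ 1 / 2 := by rw [one_div]; exact inv_anti₀ two_pos hq
  refine ⟨prod_range_one_sub_pow_succ_le hr0.le (by linarith) hd,
    one_sub_sub_sq_lt_prod_range_one_sub_pow_succ hr0 (by linarith) d, ?_⟩
  nlinarith
end

section
/- Let E/F be a finite Galois extension of fields whose Galois group is cyclic of order t, generated by α. Let A ∈ GL(d,E) and set C = A·(A^α)⁻¹. Define the map L : Mat(d,E) → Mat(d,E) by L(X) = X + C·X^α + C·C^α·X^{α²} + ··· + C·C^α···C^{α^{t−2}}·X^{α^{t−1}}. Then the image of L equals the set {A·Y : Y ∈ Mat(d,F)}, and this set also equals {A′ ∈ Mat(d,E) : C·(A′)^α = A′}. -/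
section AuxAveraging

variable {F E : Type*} [Field F] [Field E] [Algebra F E]
  [FiniteDimensional F E] [IsGalois F E]

private lemma aux_fixed_mem_range (α : E ≃ₐ[F] E)
    (hgen : ∀ σ : E ≃ₐ[F] E, σ ∈ Subgroup.zpowers α)
    {x : E} (hx : α x = x) : x ∈ (algebraMap F E).range := by
  have hall : ∀ σ : E ≃ₐ[F] E, σ x = x := by
    intro σ
    have hα : α ∈ MulAction.stabilizer (E ≃ₐ[F] E) x := hx
    exact (Subgroup.zpowers_le.mpr hα) (hgen σ)
  have hx' : x ∈ IntermediateField.fixedField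
      (IntermediateField.fixingSubgroup (⊥ : IntermediateField F E)) := by
    intro σ; exact hall σ
  rw [IsGalois.fixedField_fixingSubgroup] at hx'
  obtain ⟨c, hc⟩ := IntermediateField.mem_bot.mp hx'
  exact ⟨c, hc⟩

private lemma aux_trace_surj (t : ℕ) (α : E ≃ₐ[F] E) (hord : orderOf α = t)
    (hgen : ∀ σ : E ≃ₐ[F] E, σ ∈ Subgroup.zpowers α)
    {y : E} (hy : y ∈ (algebraMap F E).range) :
    ∃ z : E, ∑ i ∈ Finset.range t, (α ^ i) z = y := by
  obtain ⟨c, rfl⟩ := hy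
  obtain ⟨z, hz⟩ := Algebra.trace_surjective F E c
  refine ⟨z, ?_⟩
  rw [← hz, trace_eq_sum_automorphisms]
  have hfin : IsOfFinOrder α := by
    rcases t with _ | t
    · exact (orderOf_pos α).ne' hord |>.elim
    · exact orderOf_pos_iff.mp (hord ▸ t.succ_pos)
  refine Finset.sum_bij (fun i _ => α ^ i) (fun _ _ => Finset.mem_univ _) ?_ ?_ ?_
  · intro i hi j hj hij
    exact pow_injOn_Iio_orderOf (by simpa [hord] using Finset.mem_range.mp hi)
      (by simpa [hord] using Finset.mem_range.mp hj) hij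
  · intro σ _
    obtain ⟨n, hn⟩ := hfin.mem_powers_iff_mem_zpowers.mpr (hgen σ)
    refine ⟨n % t, Finset.mem_range.mpr (Nat.mod_lt _ (hord ▸ hfin.orderOf_pos)), ?_⟩
    show α ^ (n % t) = σ
    rw [← hn, ← hord, pow_mod_orderOf]
  · intro i _; rfl

end AuxAveraging

/-- For `A ∈ GL(d,E)` and `C = A·(A^α)⁻¹`, the map
`L(X) = X + C·X^α + C·C^α·X^{α²} + ··· + C·C^α···C^{α^{t−2}}·X^{α^{t−1}}`
has image `{A·Y : Y ∈ Mat(d,F)}`, which also equals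
`{A′ ∈ Mat(d,E) : C·(A′)^α = A′}`. -/
theorem image_of_averaging_map
    {F E : Type*} [Field F] [Field E] [Algebra F E]
    [FiniteDimensional F E] [IsGalois F E]
    (t : ℕ) (α : E ≃ₐ[F] E) (hord : orderOf α = t)
    (hgen : ∀ σ : E ≃ₐ[F] E, σ ∈ Subgroup.zpowers α)
    {d : ℕ}
    (A : GL (Fin d) E)
    (C : Matrix (Fin d) (Fin d) E)
    (hCdef : C = (A : Matrix (Fin d) (Fin d) E)
        * ((A : Matrix (Fin d) (Fin d) E).map ⇑α)⁻¹) :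
    Set.range (fun X : Matrix (Fin d) (Fin d) E =>
        ∑ i ∈ Finset.range t,
          (((List.range i).map fun j => C.map ⇑(α ^ j)).prod) * X.map ⇑(α ^ i))
      = {A' : Matrix (Fin d) (Fin d) E |
          ∃ Y : Matrix (Fin d) (Fin d) E,
            (∀ i j : Fin d, Y i j ∈ (algebraMap F E).range) ∧
            A' = (A : Matrix (Fin d) (Fin d) E) * Y} ∧
    {A' : Matrix (Fin d) (Fin d) E |
        ∃ Y : Matrix (Fin d) (Fin d) E,
          (∀ i j : Fin d, Y i j ∈ (algebraMap F E).range) ∧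
          A' = (A : Matrix (Fin d) (Fin d) E) * Y}
      = {A' : Matrix (Fin d) (Fin d) E | C * A'.map ⇑α = A'} := by
  set B : Matrix (Fin d) (Fin d) E := (A : Matrix (Fin d) (Fin d) E) with hB
  set Bi : Matrix (Fin d) (Fin d) E := ((A⁻¹ : GL (Fin d) E) : Matrix (Fin d) (Fin d) E)
    with hBi
  have hBBi : B * Bi = 1 := A.mul_inv
  have hBiB : Bi * B = 1 := A.inv_mul
  -- basic map facts
  have hmapmul : ∀ (σ : E ≃ₐ[F] E) (M N : Matrix (Fin d) (Fin d) E),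
      (M * N).map ⇑σ = M.map ⇑σ * N.map ⇑σ := fun σ M N =>
    Matrix.map_mul (f := (σ : E →+* E))
  have hmapone : ∀ (σ : E ≃ₐ[F] E),
      (1 : Matrix (Fin d) (Fin d) E).map ⇑σ = 1 := fun σ =>
    Matrix.map_one _ (map_zero σ) (map_one σ)
  have hmap0 : ∀ M : Matrix (Fin d) (Fin d) E, M.map ⇑(α ^ 0) = M := by
    intro M; rw [pow_zero]; ext i j; simp [Matrix.map_apply]
  have hmapsucc : ∀ (i : ℕ) (M : Matrix (Fin d) (Fin d) E),
      (M.map ⇑(α ^ i)).map ⇑α = M.map ⇑(α ^ (i + 1)) := by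
    intro i M
    ext k l
    simp only [Matrix.map_apply, pow_succ']
    rfl
  have hmapsucc' : ∀ (i : ℕ) (M : Matrix (Fin d) (Fin d) E),
      (M.map ⇑α).map ⇑(α ^ i) = M.map ⇑(α ^ (i + 1)) := by
    intro i M
    ext k l
    simp only [Matrix.map_apply, pow_succ]
    rfl
  -- the inverse of B.map α
  have hBmapinv : (B.map ⇑α)⁻¹ = Bi.map ⇑α :=
    Matrix.inv_eq_left_inv (by rw [← hmapmul, hBiB, hmapone])
  have hBiBα : Bi.map ⇑α * B.map ⇑α = 1 := by rw [← hmapmul, hBiB, hmapone]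
  have hC : C * B.map ⇑α = B := by
    rw [hCdef, hBmapinv, mul_assoc, hBiBα, mul_one]
  have hCBi : C = B * Bi.map ⇑α := by rw [hCdef, hBmapinv]
  set P : ℕ → Matrix (Fin d) (Fin d) E :=
    fun i => ((List.range i).map fun j => C.map ⇑(α ^ j)).prod with hP
  have hP0 : P 0 = 1 := by simp [hP]
  have hPsucc : ∀ i, P (i + 1) = P i * C.map ⇑(α ^ i) := by
    intro i
    simp [hP, List.range_succ]
  have hPA : ∀ i, P i * B.map ⇑(α ^ i) = B := by
    intro i
    induction i with
    | zero => rw [hP0, one_mul, hmap0]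
    | succ i ih =>
      have h1 : C.map ⇑(α ^ i) * B.map ⇑(α ^ (i + 1)) = B.map ⇑(α ^ i) := by
        rw [← hmapsucc' i B, ← hmapmul, hC]
      rw [hPsucc, mul_assoc, h1, ih]
  have hαt : ∀ M : Matrix (Fin d) (Fin d) E, M.map ⇑(α ^ t) = M := by
    intro M; rw [← hord, pow_orderOf_eq_one]; ext i j; simp [Matrix.map_apply]
  have hPt : P t = 1 := by
    have h2 := hPA t
    rw [hαt] at h2
    calc P t = P t * (B * Bi) := by rw [hBBi, mul_one]
      _ = P t * B * Bi := by rw [mul_assoc]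
      _ = B * Bi := by rw [h2]
      _ = 1 := hBBi
  have hCP : ∀ i, C * (P i).map ⇑α = P (i + 1) := by
    intro i
    induction i with
    | zero => rw [hP0, hmapone, mul_one, hPsucc, hP0, one_mul, hmap0]
    | succ i ih =>
      rw [hPsucc i, hmapmul, ← mul_assoc, ih, hmapsucc, ← hPsucc]
  have hmapsum : ∀ (s : Finset ℕ) (f : ℕ → Matrix (Fin d) (Fin d) E),
      (∑ i ∈ s, f i).map ⇑α = ∑ i ∈ s, (f i).map ⇑α := by
    intro s f
    ext k l
    simp [Matrix.map_apply, Matrix.sum_apply, map_sum]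
  -- second set equality
  have hset2 : {A' : Matrix (Fin d) (Fin d) E |
        ∃ Y : Matrix (Fin d) (Fin d) E,
          (∀ i j : Fin d, Y i j ∈ (algebraMap F E).range) ∧ A' = B * Y}
      = {A' : Matrix (Fin d) (Fin d) E | C * A'.map ⇑α = A'} := by
    ext A'
    simp only [Set.mem_setOf_eq]
    constructor
    · rintro ⟨Y, hY, rfl⟩
      have hYα : Y.map ⇑α = Y := by
        ext i j
        obtain ⟨c, hc⟩ := hY i j
        simp [Matrix.map_apply, ← hc]
      rw [hmapmul, hYα, ← mul_assoc, hC]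
    · intro h
      have hfix : Bi.map ⇑α * A'.map ⇑α = Bi * A' := by
        have h2 : B * (Bi.map ⇑α * A'.map ⇑α) = A' := by
          rw [← mul_assoc, ← hCBi, h]
        calc Bi.map ⇑α * A'.map ⇑α
            = Bi * B * (Bi.map ⇑α * A'.map ⇑α) := by rw [hBiB, one_mul]
          _ = Bi * (B * (Bi.map ⇑α * A'.map ⇑α)) := by rw [mul_assoc]
          _ = Bi * A' := by rw [h2]
      refine ⟨Bi * A', ?_, ?_⟩
      · intro i j
        have hfix2 : (Bi * A').map ⇑α = Bi * A' := by rw [hmapmul, hfix]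
        have := congrFun (congrFun hfix2 i) j
        exact aux_fixed_mem_range α hgen this
      · rw [← mul_assoc, hBBi, one_mul]
  refine ⟨?_, hset2⟩
  rw [hset2]
  ext A'
  simp only [Set.mem_range, Set.mem_setOf_eq]
  constructor
  · rintro ⟨X, rfl⟩
    show C * (∑ i ∈ Finset.range t, P i * X.map ⇑(α ^ i)).map ⇑α
        = ∑ i ∈ Finset.range t, P i * X.map ⇑(α ^ i)
    rw [hmapsum, Finset.mul_sum]
    have hterm : ∀ i, C * (P i * X.map ⇑(α ^ i)).map ⇑α
        = P (i + 1) * X.map ⇑(α ^ (i + 1)) := by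
      intro i
      rw [hmapmul, ← mul_assoc, hCP, hmapsucc]
    rw [Finset.sum_congr rfl fun i _ => hterm i]
    have h1 := Finset.sum_range_succ' (fun i => P i * X.map ⇑(α ^ i)) t
    have h2 := Finset.sum_range_succ (fun i => P i * X.map ⇑(α ^ i)) t
    have h3 : P t * X.map ⇑(α ^ t) = P 0 * X.map ⇑(α ^ 0) := by
      rw [hPt, hP0, hαt, hmap0]
    have h4 := h1.symm.trans h2
    rw [h3] at h4
    exact add_right_cancel h4
  · intro hA'
    obtain ⟨Y, hY, rfl⟩ := (Set.ext_iff.mp hset2 A').mpr hA'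
    choose z hz using fun k l => aux_trace_surj t α hord hgen (hY k l)
    refine ⟨B * Matrix.of z, ?_⟩
    show ∑ i ∈ Finset.range t, P i * (B * Matrix.of z).map ⇑(α ^ i) = B * Y
    have hterm : ∀ i, P i * (B * Matrix.of z).map ⇑(α ^ i)
        = B * (Matrix.of z).map ⇑(α ^ i) := by
      intro i; rw [hmapmul, ← mul_assoc, hPA]
    rw [Finset.sum_congr rfl fun i _ => hterm i, ← Finset.mul_sum]
    congr 1
    ext k l
    rw [Matrix.sum_apply]
    simpa [Matrix.map_apply] using hz k l
end

section
/- Let E/F be a finite Galois extension of fields whose Galois group is cyclic of prime order p, generated by α. Let G be a group, H a normal subgroup of G, and a ∈ G an element with a^p ∈ H. Let σ : H → GL(d,E) be an absolutely irreducible representation, and suppose A ∈ GL(d,E) satisfies A·σ(h)^α·A⁻¹ = σ(a h a⁻¹) for all h ∈ H. Then A·A^α·A^{α²}···A^{α^{p−1}} = μ·σ(a^p) for some nonzero μ ∈ F. -/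
/-!
Let `N = A · A^α ⋯ A^{α^{p-1}}`. Iterating the intertwining relation `p` times and using
`α^p = 1` shows that `N` and `σ(a^p)` induce the same conjugation on `σ(H)`, so by absolute
irreducibility `N = c · σ(a^p)` for a scalar `c ∈ E`. Both `N` (by telescoping the product) and
`σ(a^p)` (since `a` commutes with `a^p`) satisfy `A · X^α = X · A`, which forces `α c = c`;
as `α` generates `Gal(E/F)`, `c` lies in `F`.
-/

open Matrix

section TwistedNorm

variable {M Φ : Type*} [Monoid M] [FunLike Φ M M] (φ : Φ) (x : M)

def twistedNorm (n : ℕ) : M := ((List.range n).map fun i => φ^[i] x).prod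

@[simp] lemma twistedNorm_zero : twistedNorm φ x 0 = 1 := rfl

lemma twistedNorm_succ (n : ℕ) : twistedNorm φ x (n + 1) = twistedNorm φ x n * φ^[n] x := by
  simp only [twistedNorm, List.prod_range_succ]

variable [MonoidHomClass Φ M M]

lemma twistedNorm_succ' (n : ℕ) : twistedNorm φ x (n + 1) = x * φ (twistedNorm φ x n) := by
  simp only [twistedNorm, List.prod_range_succ', Function.iterate_zero_apply, map_list_prod,
    List.map_map, Function.comp_def, Function.iterate_succ_apply']

variable {φ x}

lemma IsUnit.twistedNorm (hx : IsUnit x) (n : ℕ) : IsUnit (twistedNorm φ x n) := by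
  induction n with
  | zero => exact isUnit_one
  | succ n ih => exact twistedNorm_succ' φ x n ▸ hx.mul (ih.map φ)

lemma mul_map_twistedNorm_of_iterate_eq {n : ℕ} (hn : φ^[n] x = x) :
    x * φ (twistedNorm φ x n) = twistedNorm φ x n * x := by
  rw [← twistedNorm_succ', twistedNorm_succ, hn]

lemma twistedNorm_mul_iterate {S : Type*} {g : S → M} {f : S → S}
    (h : ∀ s, x * φ (g s) = g (f s) * x) (n : ℕ) (s : S) :
    twistedNorm φ x n * φ^[n] (g s) = g (f^[n] s) * twistedNorm φ x n := by
  induction n generalizing s with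
  | zero => simp
  | succ n ih =>
    rw [twistedNorm_succ', Function.iterate_succ_apply', Function.iterate_succ_apply', mul_assoc,
      ← map_mul, ih, map_mul, ← mul_assoc, h, mul_assoc]

end TwistedNorm

lemma AlgEquiv.mapMatrix_iterate_apply {n R A : Type*} [Fintype n] [DecidableEq n]
    [CommSemiring R] [Semiring A] [Algebra R A] (α : A ≃ₐ[R] A) (i : ℕ) (X : Matrix n n A) :
    α.mapMatrix^[i] X = X.map ⇑(α ^ i) := by
  induction i with
  | zero => exact (map_id' X).symm
  | succ i ih =>
    rw [Function.iterate_succ_apply', ih, pow_succ', mapMatrix_apply, map_map]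
    rfl

lemma MulAut.conjNormal_iterate_apply {G : Type*} [Group G] {H : Subgroup G} [H.Normal] (g : G)
    (n : ℕ) (h : H) : (MulAut.conjNormal g)^[n] h = MulAut.conjNormal (g ^ n) h := by
  rw [map_pow, ← hom_coe_pow (fun f : MulAut H => ⇑f) rfl (fun _ _ => rfl)]

namespace Matrix

variable {n K : Type*} [Fintype n] [DecidableEq n]

lemma exists_scalar_eq_of_forall_commute [CommRing K] {s : Set (Matrix n n K)}
    (hs : Submodule.span K s = ⊤) {C : Matrix n n K} (hC : ∀ X ∈ s, Commute X C) :
    ∃ c, scalar n c = C := by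
  have hspan : Submodule.span K s ≤ Subalgebra.toSubmodule (Subalgebra.centralizer K {C}) :=
    Submodule.span_le.2 fun X hX => (Subalgebra.mem_centralizer_iff K).2 fun _ hY =>
      (Set.mem_singleton_iff.1 hY) ▸ (hC X hX).symm.eq
  refine mem_range_scalar_iff_commute_single'.2 fun i j => ?_
  exact ((Subalgebra.mem_centralizer_iff K).1 (hspan (hs ▸ Submodule.mem_top)) C rfl).symm

lemma exists_eq_smul_of_forall_mul_eq_conj_mul [CommRing K] {s : Set (Matrix n n K)}
    (hs : Submodule.span K s = ⊤) (S : GL n K) {N : Matrix n n K}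
    (hN : ∀ X ∈ s, N * X = S * X * (S⁻¹ : GL n K) * N) :
    ∃ c : K, N = c • (S : Matrix n n K) := by
  obtain ⟨c, hc⟩ := exists_scalar_eq_of_forall_commute hs
    (C := (S⁻¹ : GL n K) * N) fun X hX => by
      simp only [Commute, SemiconjBy, mul_assoc, hN X hX, Units.inv_mul_cancel_left]
  refine ⟨c, ?_⟩
  rw [← Units.mul_inv_cancel_left S N, ← hc, scalar_apply, ← smul_one_eq_diagonal,
    mul_smul_comm, mul_one]

lemma apply_eq_self_of_mul_map_smul_eq [Field K] (f : K →+* K) {A S : Matrix n n K}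
    (hSA : S * A ≠ 0) (hS : A * S.map f = S * A) {c : K}
    (hcS : A * (c • S).map f = (c • S) * A) : f c = c := by
  refine smul_left_injective K hSA ?_
  calc f c • (S * A) = A * (c • S).map f := by
        rw [Matrix.map_smul' _ _ _ (map_mul f), mul_smul_comm, hS]
    _ = c • (S * A) := by rw [hcS, smul_mul_assoc]

end Matrix

lemma IsGalois.mem_range_algebraMap_of_apply_eq_self {F E : Type*} [Field F] [Field E]
    [Algebra F E] [FiniteDimensional F E] [IsGalois F E] {α : E ≃ₐ[F] E}
    (hgen : ∀ β : E ≃ₐ[F] E, β ∈ Subgroup.zpowers α) {c : E} (hc : α c = c) :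
    c ∈ Set.range (algebraMap F E) :=
  (mem_range_algebraMap_iff_fixed c).2 fun β =>
    Subgroup.zpowers_le.2 (MulAction.mem_stabilizer_iff.2 hc) (hgen β)

theorem twisted_intertwiner_norm_is_scalar_in_F_general
    {F E : Type*} [Field F] [Field E] [Algebra F E]
    [FiniteDimensional F E] [IsGalois F E]
    (p : ℕ) (α : E ≃ₐ[F] E) (hord : orderOf α = p)
    (hgen : ∀ σ : E ≃ₐ[F] E, σ ∈ Subgroup.zpowers α)
    {G : Type*} [Group G] (H : Subgroup G) (hN : H.Normal)
    (a : G) (ha : a ^ p ∈ H) {d : ℕ}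
    (σ : H →* GL (Fin d) E)
    (hirr : Submodule.span E (Set.range fun h => (σ h : Matrix (Fin d) (Fin d) E)) = ⊤)
    (A : GL (Fin d) E)
    (hA : ∀ (h : G) (hh : h ∈ H),
      (A : Matrix (Fin d) (Fin d) E)
          * ((σ ⟨h, hh⟩ : Matrix (Fin d) (Fin d) E).map ⇑α)
          * ((A⁻¹ : GL (Fin d) E) : Matrix (Fin d) (Fin d) E)
        = (σ ⟨a * h * a⁻¹, hN.conj_mem h hh a⟩ : Matrix (Fin d) (Fin d) E)) :
    ∃ μ : F, μ ≠ 0 ∧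
      ((List.range p).map fun i =>
          (A : Matrix (Fin d) (Fin d) E).map ⇑(α ^ i)).prod
        = algebraMap F E μ • (σ ⟨a ^ p, ha⟩ : Matrix (Fin d) (Fin d) E) := by
  rcases isEmpty_or_nonempty (Fin d) with hd | hd
  · exact ⟨1, one_ne_zero, Subsingleton.elim _ _⟩
  have : H.Normal := hN
  set N := twistedNorm α.mapMatrix (A : Matrix (Fin d) (Fin d) E) p
  set S := σ ⟨a ^ p, ha⟩
  have hαp : ∀ X : Matrix (Fin d) (Fin d) E, α.mapMatrix^[p] X = X := fun X => by
    rw [AlgEquiv.mapMatrix_iterate_apply, ← hord, pow_orderOf_eq_one]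
    exact map_id' X
  have hAσ : ∀ h : H,
      A.val * α.mapMatrix (σ h).val = (σ (MulAut.conjNormal a h)).val * A.val := fun h => by
    have := congrArg (· * A.val) (hA h.1 h.2)
    simp only [Units.inv_mul_cancel_right] at this
    exact this
  have hconj : ∀ h : H,
      MulAut.conjNormal (a ^ p) h = ⟨a ^ p, ha⟩ * h * ⟨a ^ p, ha⟩⁻¹ := fun _ => rfl
  obtain ⟨c, hNS⟩ := exists_eq_smul_of_forall_mul_eq_conj_mul hirr S (N := N) <| by
    rintro _ ⟨h, rfl⟩
    have key := twistedNorm_mul_iterate hAσ p h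
    rwa [hαp, MulAut.conjNormal_iterate_apply, hconj, map_mul, map_mul, map_inv, Units.val_mul,
      Units.val_mul] at key
  have hS : A.val * α.mapMatrix S.val = S.val * A.val := by
    have hfix : MulAut.conjNormal a ⟨a ^ p, ha⟩ = ⟨a ^ p, ha⟩ := Subtype.ext <| by
      rw [MulAut.conjNormal_apply, (Commute.self_pow a p).eq, mul_inv_cancel_right]
    simpa only [hfix] using hAσ ⟨a ^ p, ha⟩
  have hαc : α c = c := apply_eq_self_of_mul_map_smul_eq (α : E →+* E) (S * A).ne_zero hS
    (hNS ▸ mul_map_twistedNorm_of_iterate_eq (hαp A))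
  obtain ⟨μ, rfl⟩ := IsGalois.mem_range_algebraMap_of_apply_eq_self hgen hαc
  refine ⟨μ, ?_, ?_⟩
  · rintro rfl
    have hNunit : IsUnit N := A.isUnit.twistedNorm p
    exact hNunit.ne_zero (by rw [hNS, map_zero, zero_smul])
  · rw [← hNS]
    simp only [N, twistedNorm, AlgEquiv.mapMatrix_iterate_apply]

/-- (From Section 2, Case 2.) Let the Galois group of `E/F` be cyclic of prime order
`p`, generated by `α`. Let `H ⊴ G`, `a ∈ G` with `a^p ∈ H`, let
`σ : H → GL(d,E)` be absolutely irreducible, and suppose `A ∈ GL(d,E)` satisfies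
`A·σ(h)^α·A⁻¹ = σ(a h a⁻¹)` for all `h ∈ H`. Then
`A·A^α···A^{α^{p−1}} = μ·σ(a^p)` for some nonzero `μ ∈ F`. -/
theorem twisted_intertwiner_norm_is_scalar_in_F
    {F E : Type*} [Field F] [Field E] [Algebra F E]
    [FiniteDimensional F E] [IsGalois F E]
    (p : ℕ) (hp : p.Prime) (α : E ≃ₐ[F] E) (hord : orderOf α = p)
    (hgen : ∀ σ : E ≃ₐ[F] E, σ ∈ Subgroup.zpowers α)
    {G : Type*} [Group G] (H : Subgroup G) (hN : H.Normal)
    (a : G) (ha : a ^ p ∈ H) {d : ℕ}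
    (σ : H →* GL (Fin d) E)
    (hirr : Submodule.span E (Set.range fun h => (σ h : Matrix (Fin d) (Fin d) E)) = ⊤)
    (A : GL (Fin d) E)
    (hA : ∀ (h : G) (hh : h ∈ H),
      (A : Matrix (Fin d) (Fin d) E)
          * ((σ ⟨h, hh⟩ : Matrix (Fin d) (Fin d) E).map ⇑α)
          * ((A⁻¹ : GL (Fin d) E) : Matrix (Fin d) (Fin d) E)
        = (σ ⟨a * h * a⁻¹, hN.conj_mem h hh a⟩ : Matrix (Fin d) (Fin d) E)) :
    ∃ μ : F, μ ≠ 0 ∧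
      ((List.range p).map fun i =>
          (A : Matrix (Fin d) (Fin d) E).map ⇑(α ^ i)).prod
        = algebraMap F E μ • (σ ⟨a ^ p, ha⟩ : Matrix (Fin d) (Fin d) E) :=
  twisted_intertwiner_norm_is_scalar_in_F_general p α hord hgen H hN a ha σ hirr A hA
end

section
/- Let E be a finite field of order q, let p be a prime with p ≠ char(E) and p not dividing q − 1, and fix an algebraic closure K of E. Let μ ∈ E be nonzero. Then the equation ν^p = μ has exactly p solutions ν in K, exactly one of which lies in E; and for every solution ν not lying in E, the subfield E(ν) of K generated by ν over E is the smallest extension field of E inside K whose order is congruent to 1 modulo p (i.e., |E(ν)| ≡ 1 (mod p), and E(ν) is contained in every finite subfield of K that contains E and has order ≡ 1 (mod p)). -/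
/-!
Since `p ∤ q - 1`, the map `x ↦ x ^ p` is a bijection of `E`, so `μ` has exactly one `p`-th root
`ν₀` in `E`. As `p ≠ char E`, the field `K` contains a primitive `p`-th root of unity, and the
`p`-th roots of `μ` are the `p` distinct elements `ν₀ ζ` with `ζ ^ p = 1`. For a root `ν ∉ E`, the
quotient `ν / ν₀` is a primitive `p`-th root of unity, so a subfield `L ⊇ E` contains `ν` exactly
when it contains a primitive `p`-th root of unity, which for finite `L` happens exactly when
`p ∣ |L| - 1` (Cauchy's theorem in the unit group `Lˣ`).
-/

open IntermediateField

theorem pow_injective_of_coprime_card_sub_one {F : Type*} [Field F] [Finite F] {n : ℕ}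
    (hn : n ≠ 0) (hcop : n.Coprime (Nat.card F - 1)) : Function.Injective fun x : F => x ^ n := by
  have := Fintype.ofFinite F
  intro a b (hab : a ^ n = b ^ n)
  rcases eq_or_ne b 0 with rfl | hb
  · exact (pow_eq_zero_iff hn).mp (hab.trans (zero_pow hn))
  have hr : (a / b) ^ n = 1 := by rw [div_pow, hab, div_self (pow_ne_zero n hb)]
  have hne : a / b ≠ 0 := fun h0 => by simp [h0, zero_pow hn] at hr
  have hq : (a / b) ^ (Nat.card F - 1) = 1 := by
    rw [Nat.card_eq_fintype_card]
    exact FiniteField.pow_card_sub_one_eq_one _ hne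
  have h1 : (a / b) ^ n.gcd (Nat.card F - 1) = 1 := pow_gcd_eq_one.mpr ⟨hr, hq⟩
  rwa [hcop.gcd_eq_one, pow_one, div_eq_one_iff_eq hb] at h1

theorem FiniteField.exists_isPrimitiveRoot_iff_card_mod_eq_one {F : Type*} [Field F] [Finite F]
    {p : ℕ} (hp : p.Prime) : (∃ ζ : F, IsPrimitiveRoot ζ p) ↔ Nat.card F % p = 1 := by
  have : Fact p.Prime := ⟨hp⟩
  have hmod : Nat.card F % p = 1 ↔ p ∣ Nat.card F - 1 := by
    rw [← Nat.modEq_iff_dvd' Nat.card_pos, Nat.ModEq, Nat.mod_eq_of_lt hp.one_lt, eq_comm]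
  rw [hmod, ← Nat.card_units]
  constructor
  · rintro ⟨_, hζ⟩
    obtain ⟨u, rfl⟩ := hζ.isUnit hp.ne_zero
    rw [IsPrimitiveRoot.coe_units_iff] at hζ
    exact hζ.eq_orderOf ▸ orderOf_dvd_natCard u
  · intro hdvd
    obtain ⟨u, hu⟩ := exists_prime_orderOf_dvd_card' p hdvd
    exact ⟨u, IsPrimitiveRoot.coe_units_iff.mpr (hu ▸ IsPrimitiveRoot.orderOf u)⟩

namespace IsPrimitiveRoot

variable {R : Type*} [CommRing R] [IsDomain R] {ζ : R} {n : ℕ}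

theorem ncard_setOf_pow_eq [NeZero n] (hζ : IsPrimitiveRoot ζ n) {a : R} (ha : a ≠ 0)
    (hroot : ∃ α, α ^ n = a) : {x : R | x ^ n = a}.ncard = n := by
  classical
  have hset : {x : R | x ^ n = a} = ↑(Polynomial.nthRoots n a).toFinset := by
    ext
    simp [Polynomial.mem_nthRoots (NeZero.pos n)]
  rw [hset, Set.ncard_coe_finset, Multiset.toFinset_card_of_nodup (hζ.nthRoots_nodup ha),
    hζ.card_nthRoots, if_pos hroot]

theorem mem_iff_exists_isPrimitiveRoot [NeZero n] (hζ : IsPrimitiveRoot ζ n) {S : Type*}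
    [SetLike S R] [SubmonoidClass S R] (s : S) : ζ ∈ s ↔ ∃ η : s, IsPrimitiveRoot η n := by
  refine ⟨fun hs => ⟨⟨ζ, hs⟩, coe_submonoidClass_iff.mp hζ⟩, fun ⟨η, hη⟩ => ?_⟩
  obtain ⟨i, -, hi⟩ := (coe_submonoidClass_iff.mpr hη).eq_pow_of_pow_eq_one hζ.pow_eq_one
  exact hi ▸ pow_mem η.2 i

theorem mem_iff_card_mod_eq_one {K : Type*} [Field K] {ζ : K} {p : ℕ} (hp : p.Prime)
    (hζ : IsPrimitiveRoot ζ p) {S : Type*} [SetLike S K] [SubfieldClass S K] (s : S)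
    [Finite s] : ζ ∈ s ↔ Nat.card s % p = 1 := by
  have : NeZero p := ⟨hp.ne_zero⟩
  rw [hζ.mem_iff_exists_isPrimitiveRoot, FiniteField.exists_isPrimitiveRoot_iff_card_mod_eq_one hp]

end IsPrimitiveRoot

theorem isPrimitiveRoot_div_of_pow_eq_pow {K : Type*} [Field K] {p : ℕ} (hp : p.Prime)
    {x y : K} (hxy : x ^ p = y ^ p) (hy : y ≠ 0) (hne : x ≠ y) : IsPrimitiveRoot (x / y) p := by
  have : Fact p.Prime := ⟨hp⟩
  refine IsPrimitiveRoot.iff_orderOf.mpr (orderOf_eq_prime ?_ ?_)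
  · rw [div_pow, hxy, div_self (pow_ne_zero p hy)]
  · rwa [Ne, div_eq_one_iff_eq hy]

theorem IntermediateField.adjoin_simple_le_iff_card_mod_eq_one {F K : Type*} [Field F] [Field K]
    [Algebra F K] {p : ℕ} (hp : p.Prime) {ν : K} {c : F} (hc : c ≠ 0)
    (hζ : IsPrimitiveRoot (ν / algebraMap F K c) p) (L : IntermediateField F K) [Finite L] :
    F⟮ν⟯ ≤ L ↔ Nat.card L % p = 1 := by
  have hc' : algebraMap F K c ≠ 0 := (map_ne_zero _).mpr hc
  rw [adjoin_simple_le_iff, ← hζ.mem_iff_card_mod_eq_one hp L]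
  refine ⟨fun h => div_mem h (L.algebraMap_mem c), fun h => ?_⟩
  simpa [hc'] using mul_mem h (L.algebraMap_mem c)

/-- Let `E` be a finite field of order `q`, `p` a prime with `p ≠ char E` and
`p ∤ q − 1`, and `K` an algebraic closure of `E`. For nonzero `μ ∈ E`, the equation
`ν^p = μ` has exactly `p` solutions in `K`, exactly one of which lies in `E`; and for
every solution `ν ∉ E`, the field `E(ν)` is the smallest extension of `E` inside `K`
whose order is congruent to `1` modulo `p`. -/
theorem pth_roots_in_algebraic_closure
    {E K : Type*} [Field E] [Fintype E] [Field K] [Algebra E K]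
    [IsAlgClosure E K]
    (p : ℕ) (hp : p.Prime) (hchar : p ≠ ringChar E)
    (hdvd : ¬ p ∣ (Fintype.card E - 1))
    (μ : E) (hμ : μ ≠ 0) :
    ({ν : K | ν ^ p = algebraMap E K μ}.ncard = p) ∧
    (∃! ν : K, ν ^ p = algebraMap E K μ ∧ ν ∈ (algebraMap E K).range) ∧
    (∀ ν : K, ν ^ p = algebraMap E K μ → ν ∉ (algebraMap E K).range →
      Finite ↥(IntermediateField.adjoin E {ν}) ∧
      Nat.card ↥(IntermediateField.adjoin E {ν}) % p = 1 ∧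
      ∀ L : IntermediateField E K, Finite ↥L → Nat.card ↥L % p = 1 →
        IntermediateField.adjoin E {ν} ≤ L) := by
  have : NeZero p := ⟨hp.ne_zero⟩
  have : IsAlgClosed K := IsAlgClosure.isAlgClosed E
  have : Algebra.IsAlgebraic E K := IsAlgClosure.isAlgebraic
  have : NeZero (p : K) := ⟨CharP.cast_ne_zero_of_ne_of_prime K hp
    (Algebra.ringChar_eq E K ▸ hchar).symm⟩
  obtain ⟨ξ, hξ⟩ := HasEnoughRootsOfUnity.exists_primitiveRoot K p
  have hpow : Function.Injective fun x : E => x ^ p :=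
    pow_injective_of_coprime_card_sub_one hp.ne_zero
      (hp.coprime_iff_not_dvd.mpr (Nat.card_eq_fintype_card (α := E) ▸ hdvd))
  obtain ⟨ν₀, hν₀⟩ : ∃ ν₀ : E, ν₀ ^ p = μ := (Finite.injective_iff_surjective.mp hpow) μ
  have hν₀K : algebraMap E K ν₀ ^ p = algebraMap E K μ := by rw [← map_pow, hν₀]
  have hν₀ne : ν₀ ≠ 0 := by rintro rfl; exact hμ (by simp [← hν₀, hp.ne_zero])
  refine ⟨hξ.ncard_setOf_pow_eq ((map_ne_zero _).mpr hμ) ⟨_, hν₀K⟩,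
    ⟨_, ⟨hν₀K, ν₀, rfl⟩, ?_⟩, fun ν hν hνE => ?_⟩
  · rintro _ ⟨hx, e, rfl⟩
    rw [← map_pow, (algebraMap E K).injective.eq_iff] at hx
    rw [hpow (hx.trans hν₀.symm)]
  have hζ : IsPrimitiveRoot (ν / algebraMap E K ν₀) p :=
    isPrimitiveRoot_div_of_pow_eq_pow hp (hν.trans hν₀K.symm) ((map_ne_zero _).mpr hν₀ne)
      fun h => hνE ⟨ν₀, h.symm⟩
  have : FiniteDimensional E E⟮ν⟯ := adjoin.finiteDimensional (Algebra.IsIntegral.isIntegral ν)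
  have : Finite E⟮ν⟯ := Module.finite_of_finite E
  exact ⟨inferInstance, (adjoin_simple_le_iff_card_mod_eq_one hp hν₀ne hζ _).mp le_rfl,
    fun L _ => (adjoin_simple_le_iff_card_mod_eq_one hp hν₀ne hζ L).mpr⟩
end
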